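/- Let A be an n×n complex matrix such that A^k is entrywise nonnegative and irreducible for some integer k ≥ 1, and let λ₁ be the eigenvalue of A with λ₁^k = ρ(A)^k. Then A has a right eigenvector x > 0 and a left eigenvector y > 0 (entrywise positive real vectors) for λ₁, each unique up to scalar multiples. -/

import Mathlib

open ComplexOrder

open Matrix Complex

noncomputable def specRad {n : ℕ} (A : Matrix (Fin n) (Fin n) ℂ) : ℝ :=
  sSup ((fun z : ℂ => ‖z‖) '' spectrum ℂ A)

def MatIrred {n : ℕ} (A : Matrix (Fin n) (Fin n) ℂ) : Prop :=
  ∀ S : Set (Fin n), S.Nonempty → S ≠ Set.univ → ∃ i ∈ S, ∃ j ∉ S, A i j ≠ 0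

/-!
Let `z` be an eigenvector of `A` for `λ₁`. As `λ₁ ^ k = ρ(A) ^ k =: r`, it is an eigenvector for `r`
of the nonnegative irreducible matrix `B = A ^ k`, and the triangle inequality gives `r |z| ≤ B |z|`.
By spectral mapping `ρ(B) ≤ r`, while Gelfand's formula shows that `t v ≤ B v` with `v ≥ 0`,
`v ≠ 0` forces `t ≤ ρ(B)`; applied to the positive vector `v = (1 + B) ^ (n - 1) |z|`, this
rules out `r |z| ≠ B |z|`. Irreducibility then makes `|z|` positive and the `r`-eigenspace of `B`
a line, so `z` is a multiple of `|z|`, which is therefore an eigenvector of `A`, and every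
eigenvector of `A` for `λ₁` lies on that line. Left eigenvectors are right eigenvectors of `Aᵀ`.
-/

open Finset

-- `MatIrred` for an arbitrary index type and coefficients.
def SetIrreducible {ι R : Type*} [Zero R] (M : Matrix ι ι R) : Prop :=
  ∀ S : Set ι, S.Nonempty → S ≠ Set.univ → ∃ i ∈ S, ∃ j ∉ S, M i j ≠ 0

namespace SetIrreducible

variable {ι R : Type*} [Zero R] {M : Matrix ι ι R}

lemma transpose (hM : SetIrreducible M) : SetIrreducible Mᵀ := by
  intro S hS hSuniv
  obtain ⟨i, hi, j, hj, hij⟩ :=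
    hM Sᶜ (Set.nonempty_compl.mpr hSuniv) (by simpa using hS.ne_empty)
  exact ⟨j, Set.notMem_compl_iff.mp hj, i, hi, hij⟩

lemma of_map {S : Type*} [Zero S] {f : R → S} (hf : f 0 = 0) (hM : SetIrreducible (M.map f)) :
    SetIrreducible M := by
  intro S hS hSuniv
  obtain ⟨i, hi, j, hj, hij⟩ := hM S hS hSuniv
  exact ⟨i, hi, j, hj, fun h => hij (by simp [h, hf])⟩

end SetIrreducible

section Nonneg

variable {ι : Type*} [Fintype ι] {M : Matrix ι ι ℝ}

lemma mulVec_apply_nonneg (hM : ∀ i j, 0 ≤ M i j) {u : ι → ℝ} (hu : ∀ i, 0 ≤ u i) (i : ι) :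
    0 ≤ (M *ᵥ u) i :=
  sum_nonneg fun j _ => mul_nonneg (hM i j) (hu j)

lemma mul_le_mulVec_apply (hM : ∀ i j, 0 ≤ M i j) {u : ι → ℝ} (hu : ∀ i, 0 ≤ u i) (i j : ι) :
    M i j * u j ≤ (M *ᵥ u) i :=
  single_le_sum (fun t _ => mul_nonneg (hM i t) (hu t)) (mem_univ j)

lemma mulVec_apply_mono (hM : ∀ i j, 0 ≤ M i j) {u v : ι → ℝ} (huv : ∀ i, u i ≤ v i) (i : ι) :
    (M *ᵥ u) i ≤ (M *ᵥ v) i :=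
  sum_le_sum fun j _ => mul_le_mul_of_nonneg_left (huv j) (hM i j)

lemma SetIrreducible.exists_mulVec_pos_of_eq_zero (hM : ∀ i j, 0 ≤ M i j)
    (hirr : SetIrreducible M) {u : ι → ℝ} (hu : ∀ i, 0 ≤ u i) (hne : u ≠ 0)
    (hzero : ∃ i, u i = 0) : ∃ i, u i = 0 ∧ 0 < (M *ᵥ u) i := by
  obtain ⟨i, hi, j, hj, hij⟩ := hirr {i | u i = 0} hzero fun h =>
    hne (funext fun i => (h ▸ Set.mem_univ i : i ∈ {i | u i = 0}))
  have hMij : 0 < M i j := (hM i j).lt_of_ne' hij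
  have huj : 0 < u j := (hu j).lt_of_ne' hj
  exact ⟨i, hi, (mul_pos hMij huj).trans_le (mul_le_mulVec_apply hM hu i j)⟩

lemma SetIrreducible.pos_of_mulVec_eq_smul (hM : ∀ i j, 0 ≤ M i j)
    (hirr : SetIrreducible M) {u : ι → ℝ} (hu : ∀ i, 0 ≤ u i) (hne : u ≠ 0) {r : ℝ}
    (heig : M *ᵥ u = r • u) (i : ι) : 0 < u i := by
  by_contra! h
  obtain ⟨j, hj, hpos⟩ :=
    hirr.exists_mulVec_pos_of_eq_zero hM hu hne ⟨i, le_antisymm h (hu i)⟩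
  simp [heig, hj] at hpos

lemma SetIrreducible.eq_smul_of_mulVec_eq_smul (hM : ∀ i j, 0 ≤ M i j)
    (hirr : SetIrreducible M) {r : ℝ} {x y : ι → ℝ} (hx : ∀ i, 0 < x i)
    (hxe : M *ᵥ x = r • x) (hye : M *ᵥ y = r • y) : ∃ c : ℝ, y = c • x := by
  cases isEmpty_or_nonempty ι
  · exact ⟨0, Subsingleton.elim _ _⟩
  obtain ⟨i0, hi0⟩ := Finite.exists_min fun i => y i / x i
  refine ⟨y i0 / x i0, by_contra fun hne => ?_⟩
  have hw : ∀ i, 0 ≤ (y - (y i0 / x i0) • x) i := fun i => by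
    simpa [sub_nonneg, ← le_div_iff₀ (hx i)] using hi0 i
  have hwe : M *ᵥ (y - (y i0 / x i0) • x) = r • (y - (y i0 / x i0) • x) := by
    rw [mulVec_sub, mulVec_smul, hxe, hye, smul_sub, smul_comm]
  have := hirr.pos_of_mulVec_eq_smul hM hw (sub_ne_zero.mpr hne) hwe i0
  simp [div_mul_cancel₀ _ (hx i0).ne'] at this

variable [DecidableEq ι]

lemma le_one_add_mulVec_apply (hM : ∀ i j, 0 ≤ M i j) {u : ι → ℝ} (hu : ∀ i, 0 ≤ u i)
    (i : ι) : u i ≤ ((1 + M) *ᵥ u) i := by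
  rw [add_mulVec, one_mulVec, Pi.add_apply]
  linarith [mulVec_apply_nonneg hM hu i]

lemma SetIrreducible.card_lt_card_pos_one_add_mulVec (hM : ∀ i j, 0 ≤ M i j)
    (hirr : SetIrreducible M) {u : ι → ℝ} (hu : ∀ i, 0 ≤ u i) (hne : u ≠ 0)
    (hzero : ∃ i, u i = 0) :
    #{i | 0 < u i} < #{i | 0 < ((1 + M) *ᵥ u) i} := by
  obtain ⟨i, hi, hpos⟩ := hirr.exists_mulVec_pos_of_eq_zero hM hu hne hzero
  refine card_lt_card ((ssubset_iff_of_subset fun j => ?_).mpr ⟨i, ?_, ?_⟩)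
  · simp only [mem_filter, mem_univ, true_and]
    exact fun hj => hj.trans_le (le_one_add_mulVec_apply hM hu j)
  · simpa [add_mulVec, hi] using hpos
  · simp [hi]

lemma SetIrreducible.one_add_pow_mulVec_pos_of_card_le (hM : ∀ i j, 0 ≤ M i j)
    (hirr : SetIrreducible M) (m : ℕ) {u : ι → ℝ} (hu : ∀ i, 0 ≤ u i) (hne : u ≠ 0)
    (hcard : Fintype.card ι ≤ m + #{i | 0 < u i}) (i : ι) :
    0 < ((1 + M) ^ m *ᵥ u) i := by
  induction m generalizing u with
  | zero =>
    have hfull : ({i | 0 < u i} : Finset ι) = univ :=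
      eq_univ_of_card _ (le_antisymm (card_le_univ _) (by simpa using hcard))
    simpa using (show i ∈ ({i | 0 < u i} : Finset ι) by rw [hfull]; exact mem_univ i)
  | succ m ih =>
    rw [pow_succ, ← mulVec_mulVec]
    have hle := le_one_add_mulVec_apply hM hu
    refine ih (fun j => (hu j).trans (hle j)) (fun h0 => hne (funext fun j => ?_)) ?_
    · exact le_antisymm (by simpa [h0] using hle j) (hu j)
    by_cases hzero : ∃ j, u j = 0
    · have := hirr.card_lt_card_pos_one_add_mulVec hM hu hne hzero
      omega
    · push Not at hzero
      have hfull : ({j | 0 < ((1 + M) *ᵥ u) j} : Finset ι) = univ :=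
        filter_true_of_mem fun j _ => ((hu j).lt_of_ne' (hzero j)).trans_le (hle j)
      simp [hfull]

lemma SetIrreducible.one_add_pow_mulVec_pos (hM : ∀ i j, 0 ≤ M i j)
    (hirr : SetIrreducible M) {u : ι → ℝ} (hu : ∀ i, 0 ≤ u i) (hne : u ≠ 0) (i : ι) :
    0 < ((1 + M) ^ (Fintype.card ι - 1) *ᵥ u) i := by
  refine hirr.one_add_pow_mulVec_pos_of_card_le hM _ hu hne ?_ i
  obtain ⟨j, hj⟩ := Function.ne_iff.mp hne
  have : 0 < #({i | 0 < u i} : Finset ι) :=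
    card_pos.mpr ⟨j, by simpa using (hu j).lt_of_ne' hj⟩
  omega

end Nonneg

section Spectral

open scoped ENNReal

variable {ι : Type*} [Fintype ι] [DecidableEq ι] {M : Matrix ι ι ℝ}

lemma pow_mul_le_pow_mulVec_apply (hM : ∀ i j, 0 ≤ M i j) {t : ℝ} (ht : 0 ≤ t) {v : ι → ℝ}
    (hsub : ∀ i, t * v i ≤ (M *ᵥ v) i) (m : ℕ) (i : ι) :
    t ^ m * v i ≤ (M ^ m *ᵥ v) i := by
  induction m generalizing i with
  | zero => simp
  | succ m ih =>
    calc t ^ (m + 1) * v i = t ^ m * (t * v i) := by ring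
      _ ≤ t ^ m * (M *ᵥ v) i := mul_le_mul_of_nonneg_left (hsub i) (pow_nonneg ht m)
      _ = (M *ᵥ (t ^ m • v)) i := by simp [mulVec_smul]
      _ ≤ (M *ᵥ (M ^ m *ᵥ v)) i := mulVec_apply_mono hM (fun j => by simpa using ih j) i
      _ = (M ^ (m + 1) *ᵥ v) i := by rw [mulVec_mulVec, ← pow_succ']

lemma map_ofReal_pow_mulVec_ofReal (M : Matrix ι ι ℝ) (m : ℕ) (v : ι → ℝ) (i : ι) :
    (M.map ofReal ^ m *ᵥ fun j => (v j : ℂ)) i = ((M ^ m *ᵥ v) i : ℂ) := by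
  rw [show M.map ofReal ^ m = (M ^ m).map ofReal from (map_pow ofRealHom.mapMatrix M m).symm]
  exact (RingHom.map_mulVec ofRealHom _ v i).symm

lemma ofReal_le_spectralRadius_of_smul_le_mulVec (hM : ∀ i j, 0 ≤ M i j) {t : ℝ}
    {v : ι → ℝ} (hv : ∀ i, 0 ≤ v i) (hne : v ≠ 0) (hsub : ∀ i, t * v i ≤ (M *ᵥ v) i) :
    ENNReal.ofReal t ≤ spectralRadius ℂ (M.map ofReal) := by
  rcases le_or_gt t 0 with ht | ht
  · simp [ENNReal.ofReal_of_nonpos ht]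
  let : NormedRing (Matrix ι ι ℂ) := Matrix.linftyOpNormedRing
  let : NormedAlgebra ℂ (Matrix ι ι ℂ) := Matrix.linftyOpNormedAlgebra
  have : CompleteSpace (Matrix ι ι ℂ) := FiniteDimensional.complete ℂ _
  set vc : ι → ℂ := fun i => (v i : ℂ)
  have hvc : 0 < ‖vc‖ :=
    norm_pos_iff.mpr fun h => hne (funext fun i => by simpa [vc] using congrFun h i)
  have hnorm (m : ℕ) : t ^ m ≤ ‖M.map ofReal ^ m‖ := by
    have hvec : ‖t ^ m • vc‖ ≤ ‖M.map ofReal ^ m *ᵥ vc‖ := by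
      refine (pi_norm_le_iff_of_nonneg (norm_nonneg _)).mpr fun i => ?_
      refine le_trans ?_ (norm_le_pi_norm _ i)
      rw [map_ofReal_pow_mulVec_ofReal, Pi.smul_apply, norm_smul, Complex.norm_real,
        Complex.norm_real, Real.norm_of_nonneg (pow_nonneg ht.le m), Real.norm_of_nonneg (hv i)]
      exact (pow_mul_le_pow_mulVec_apply hM ht.le hsub m i).trans (le_abs_self _)
    rw [norm_smul, norm_pow, Real.norm_of_nonneg ht.le] at hvec
    exact le_of_mul_le_mul_right (hvec.trans (linfty_opNorm_mulVec _ _)) hvc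
  refine ge_of_tendsto (spectrum.pow_nnnorm_pow_one_div_tendsto_nhds_spectralRadius _)
    ((Filter.eventually_ne_atTop 0).mono fun m hm => ?_)
  calc ENNReal.ofReal t = ENNReal.ofReal (t ^ m) ^ (1 / m : ℝ) := by
        rw [ENNReal.ofReal_pow ht.le, one_div, ENNReal.pow_rpow_inv_natCast hm]
    _ ≤ (‖M.map ofReal ^ m‖₊ : ℝ≥0∞) ^ (1 / m : ℝ) := by
        gcongr
        exact ENNReal.ofReal_le_of_le_toReal (by simpa using hnorm m)

lemma SetIrreducible.mulVec_eq_smul_of_smul_le (hM : ∀ i j, 0 ≤ M i j)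
    (hirr : SetIrreducible M) {r : ℝ} (hr : 0 ≤ r)
    (hrad : spectralRadius ℂ (M.map ofReal) ≤ ENNReal.ofReal r) {u : ι → ℝ}
    (hu : ∀ i, 0 ≤ u i) (hne : u ≠ 0) (hsub : ∀ i, r * u i ≤ (M *ᵥ u) i) :
    M *ᵥ u = r • u := by
  by_contra hneq
  obtain ⟨j, -⟩ := Function.ne_iff.mp hne
  have : Nonempty ι := ⟨j⟩
  set N := (1 + M) ^ (Fintype.card ι - 1)
  set v := N *ᵥ u
  have hv : ∀ i, 0 < v i := hirr.one_add_pow_mulVec_pos hM hu hne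
  have hNw : ∀ i, 0 < (N *ᵥ (M *ᵥ u - r • u)) i :=
    hirr.one_add_pow_mulVec_pos hM (fun i => by simpa using hsub i) (sub_ne_zero.mpr hneq)
  have hMv : M *ᵥ v - r • v = N *ᵥ (M *ᵥ u - r • u) := by
    have hcomm : M * N = N * M :=
      (((Commute.one_right M).add_right (Commute.refl M)).pow_right _).eq
    rw [mulVec_sub, mulVec_smul, mulVec_mulVec, mulVec_mulVec, hcomm]
  -- The least Collatz–Wielandt ratio of `v` exceeds `r`, contradicting `ρ(M) ≤ r`.
  obtain ⟨i0, hi0⟩ := Finite.exists_min fun i => (M *ᵥ v) i / v i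
  have hrt : r < (M *ᵥ v) i0 / v i0 := by
    have := hNw i0
    rw [← hMv, Pi.sub_apply, Pi.smul_apply, smul_eq_mul, sub_pos] at this
    rwa [lt_div_iff₀ (hv i0)]
  have hle := (ofReal_le_spectralRadius_of_smul_le_mulVec hM (fun i => (hv i).le)
    (Function.ne_iff.mpr ⟨j, (hv j).ne'⟩) fun i => (le_div_iff₀ (hv i)).mp (hi0 i)).trans hrad
  linarith [(ENNReal.ofReal_le_ofReal_iff hr).mp hle]

end Spectral

section OfReal

variable {ι : Type*} [Fintype ι] {M : Matrix ι ι ℝ}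

lemma re_map_ofReal_mulVec (M : Matrix ι ι ℝ) (w : ι → ℂ) (i : ι) :
    ((M.map ofReal *ᵥ w) i).re = (M *ᵥ fun j => (w j).re) i := by
  simp [mulVec, dotProduct, re_sum]

lemma im_map_ofReal_mulVec (M : Matrix ι ι ℝ) (w : ι → ℂ) (i : ι) :
    ((M.map ofReal *ᵥ w) i).im = (M *ᵥ fun j => (w j).im) i := by
  simp [mulVec, dotProduct, im_sum]

lemma mul_norm_le_mulVec_norm (hM : ∀ i j, 0 ≤ M i j) {r : ℝ} (hr : 0 ≤ r) {z : ι → ℂ}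
    (hz : M.map ofReal *ᵥ z = (r : ℂ) • z) (i : ι) :
    r * ‖z i‖ ≤ (M *ᵥ fun j => ‖z j‖) i :=
  calc r * ‖z i‖ = ‖(M.map ofReal *ᵥ z) i‖ := by simp [hz, abs_of_nonneg hr]
    _ ≤ ∑ j, ‖M.map ofReal i j * z j‖ := norm_sum_le _ _
    _ = (M *ᵥ fun j => ‖z j‖) i := by simp [mulVec, dotProduct, abs_of_nonneg (hM i _)]

lemma SetIrreducible.eq_smul_of_map_ofReal_mulVec_eq_smul (hM : ∀ i j, 0 ≤ M i j)
    (hirr : SetIrreducible M) {r : ℝ} {x : ι → ℝ} (hx : ∀ i, 0 < x i)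
    (hxe : M *ᵥ x = r • x) {w : ι → ℂ} (hw : M.map ofReal *ᵥ w = (r : ℂ) • w) :
    ∃ c : ℂ, w = c • fun i => (x i : ℂ) := by
  have hre : M *ᵥ (fun j => (w j).re) = r • fun j => (w j).re := funext fun i => by
    simpa [re_map_ofReal_mulVec] using congrArg re (congrFun hw i)
  have him : M *ᵥ (fun j => (w j).im) = r • fun j => (w j).im := funext fun i => by
    simpa [im_map_ofReal_mulVec] using congrArg im (congrFun hw i)
  obtain ⟨a, ha⟩ := hirr.eq_smul_of_mulVec_eq_smul hM hx hxe hre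
  obtain ⟨b, hb⟩ := hirr.eq_smul_of_mulVec_eq_smul hM hx hxe him
  refine ⟨a + b * I, funext fun i => Complex.ext ?_ ?_⟩
  · simpa using congrFun ha i
  · simpa using congrFun hb i

end OfReal

lemma pow_mulVec_eq_smul {ι R : Type*} [Fintype ι] [DecidableEq ι] [CommSemiring R]
    {A : Matrix ι ι R} {μ : R} {z : ι → R} (h : A *ᵥ z = μ • z) (m : ℕ) :
    A ^ m *ᵥ z = μ ^ m • z := by
  induction m with
  | zero => simp
  | succ m ih => rw [pow_succ, ← mulVec_mulVec, h, mulVec_smul, ih, smul_smul, pow_succ']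

lemma exists_mulVec_eq_smul_of_mem_spectrum {ι K : Type*} [Fintype ι] [DecidableEq ι] [Field K]
    {A : Matrix ι ι K} {μ : K} (h : μ ∈ spectrum K A) : ∃ z ≠ 0, A *ᵥ z = μ • z := by
  obtain ⟨z, hz⟩ := (Module.End.hasEigenvalue_iff_mem_spectrum (f := toLin' A).mpr
    (by rwa [spectrum_toLin'])).exists_hasEigenvector
  exact ⟨z, hz.2, by simpa using hz.apply_eq_smul⟩

lemma spectrum_transpose {ι K : Type*} [Fintype ι] [DecidableEq ι] [Field K]
    (A : Matrix ι ι K) : spectrum K Aᵀ = spectrum K A := by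
  ext μ
  simp [mem_spectrum_iff_isRoot_charpoly, charpoly_transpose]

lemma map_re_map_ofReal_of_nonneg {ι : Type*} {B : Matrix ι ι ℂ} (hB : ∀ i j, 0 ≤ B i j) :
    (B.map re).map ofReal = B :=
  ext fun i j => (eq_re_of_ofReal_le (r := 0) (by rw [ofReal_zero]; exact hB i j)).symm

section SpecRad

variable {n : ℕ} {A : Matrix (Fin n) (Fin n) ℂ}

lemma norm_le_specRad {μ : ℂ} (h : μ ∈ spectrum ℂ A) : ‖μ‖ ≤ specRad A :=
  le_csSup (A.finite_spectrum.image _).bddAbove ⟨μ, h, rfl⟩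

lemma specRad_transpose (A : Matrix (Fin n) (Fin n) ℂ) : specRad Aᵀ = specRad A := by
  rw [specRad, specRad, spectrum_transpose]

lemma spectralRadius_pow_le (hA : (spectrum ℂ A).Nonempty) (k : ℕ) :
    spectralRadius ℂ (A ^ k) ≤ ENNReal.ofReal (specRad A ^ k) := by
  rw [spectralRadius, spectrum.map_pow_of_nonempty hA]
  refine iSup₂_le ?_
  rintro _ ⟨μ, hμ, rfl⟩
  simpa [norm_pow, ← enorm_eq_nnnorm] using
    ENNReal.ofReal_le_ofReal (pow_le_pow_left₀ (norm_nonneg μ) (norm_le_specRad hμ) k)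

end SpecRad

lemma exists_pos_mulVec_eigenvector {n : ℕ} (A : Matrix (Fin n) (Fin n) ℂ) (k : ℕ)
    (hnonneg : ∀ i j, 0 ≤ (A ^ k) i j) (hirr : MatIrred (A ^ k))
    (lam : ℂ) (hlam : lam ∈ spectrum ℂ A) (hlamk : lam ^ k = ((specRad A : ℂ)) ^ k) :
    ∃ x : Fin n → ℝ, (∀ i, 0 < x i) ∧
      A.mulVec (fun i => (x i : ℂ)) = lam • (fun i => (x i : ℂ)) ∧
      ∀ z : Fin n → ℂ, A.mulVec z = lam • z → ∃ c : ℂ, z = c • (fun i => (x i : ℂ)) := by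
  set M := (A ^ k).map re
  have hAk : M.map ofReal = A ^ k := map_re_map_ofReal_of_nonneg hnonneg
  have hM : ∀ i j, 0 ≤ M i j := fun i j => (nonneg_iff.mp (hnonneg i j)).1
  have hirrM : SetIrreducible M := SetIrreducible.of_map ofReal_zero (hAk ▸ hirr)
  have hr : 0 ≤ specRad A ^ k := pow_nonneg ((norm_nonneg lam).trans (norm_le_specRad hlam)) k
  have hrad : spectralRadius ℂ (M.map ofReal) ≤ ENNReal.ofReal (specRad A ^ k) :=
    hAk ▸ spectralRadius_pow_le ⟨lam, hlam⟩ k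
  have hpow (w : Fin n → ℂ) (hw : A *ᵥ w = lam • w) :
      M.map ofReal *ᵥ w = ((specRad A ^ k : ℝ) : ℂ) • w := by
    rw [hAk, pow_mulVec_eq_smul hw, hlamk, ofReal_pow]
  obtain ⟨z, hz0, hz⟩ := exists_mulVec_eq_smul_of_mem_spectrum hlam
  set x : Fin n → ℝ := fun i => ‖z i‖
  have hx0 : x ≠ 0 := fun h => hz0 (funext fun i => norm_eq_zero.mp (congrFun h i))
  have hxe : M *ᵥ x = specRad A ^ k • x :=
    hirrM.mulVec_eq_smul_of_smul_le hM hr hrad (fun i => norm_nonneg _) hx0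
      (mul_norm_le_mulVec_norm hM hr (hpow z hz))
  have hx : ∀ i, 0 < x i := hirrM.pos_of_mulVec_eq_smul hM (fun i => norm_nonneg _) hx0 hxe
  have huniq (w : Fin n → ℂ) (hw : A *ᵥ w = lam • w) : ∃ c : ℂ, w = c • fun i => (x i : ℂ) :=
    hirrM.eq_smul_of_map_ofReal_mulVec_eq_smul hM hx hxe (hpow w hw)
  obtain ⟨c, hc⟩ := huniq z hz
  have hc0 : c ≠ 0 := by
    rintro rfl
    exact hz0 (by simpa using hc)
  rw [hc, mulVec_smul, smul_comm] at hz
  exact ⟨x, hx, smul_right_injective _ hc0 hz, huniq⟩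

theorem stmt_2_general {n : ℕ} (A : Matrix (Fin n) (Fin n) ℂ) (k : ℕ)
    (hnonneg : ∀ i j, 0 ≤ (A ^ k) i j) (hirr : MatIrred (A ^ k))
    (lam : ℂ) (hlam : lam ∈ spectrum ℂ A) (hlamk : lam ^ k = ((specRad A : ℂ)) ^ k) :
    (∃ x : Fin n → ℝ, (∀ i, 0 < x i) ∧
      A.mulVec (fun i => (x i : ℂ)) = lam • (fun i => (x i : ℂ)) ∧
      ∀ z : Fin n → ℂ, A.mulVec z = lam • z → ∃ c : ℂ, z = c • (fun i => (x i : ℂ))) ∧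
    (∃ y : Fin n → ℝ, (∀ i, 0 < y i) ∧
      Matrix.vecMul (fun i => (y i : ℂ)) A = lam • (fun i => (y i : ℂ)) ∧
      ∀ w : Fin n → ℂ, Matrix.vecMul w A = lam • w → ∃ c : ℂ, w = c • (fun i => (y i : ℂ))) := by
  refine ⟨exists_pos_mulVec_eigenvector A k hnonneg hirr lam hlam hlamk, ?_⟩
  have hT : Aᵀ ^ k = (A ^ k)ᵀ := (transpose_pow A k).symm
  obtain ⟨y, hy, hyA, hyuniq⟩ := exists_pos_mulVec_eigenvector Aᵀ k
    (fun i j => by rw [hT]; exact hnonneg j i) (hT ▸ SetIrreducible.transpose hirr) lam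
    (by rwa [spectrum_transpose]) (by rwa [specRad_transpose])
  exact ⟨y, hy, by rwa [← mulVec_transpose], fun w hw => hyuniq w (by rwa [mulVec_transpose])⟩

theorem stmt_2 {n : ℕ} (A : Matrix (Fin n) (Fin n) ℂ) (k : ℕ) (hk : 1 ≤ k)
    (hnonneg : ∀ i j, 0 ≤ (A ^ k) i j) (hirr : MatIrred (A ^ k))
    (lam : ℂ) (hlam : lam ∈ spectrum ℂ A) (hlamk : lam ^ k = ((specRad A : ℂ)) ^ k) :
    (∃ x : Fin n → ℝ, (∀ i, 0 < x i) ∧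
      A.mulVec (fun i => (x i : ℂ)) = lam • (fun i => (x i : ℂ)) ∧
      ∀ z : Fin n → ℂ, A.mulVec z = lam • z → ∃ c : ℂ, z = c • (fun i => (x i : ℂ))) ∧
    (∃ y : Fin n → ℝ, (∀ i, 0 < y i) ∧
      Matrix.vecMul (fun i => (y i : ℂ)) A = lam • (fun i => (y i : ℂ)) ∧
      ∀ w : Fin n → ℂ, Matrix.vecMul w A = lam • w → ∃ c : ℂ, w = c • (fun i => (y i : ℂ))) :=
  stmt_2_general A k hnonneg hirr lam hlam hlamk
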